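/- arXiv:1106.3161 — 4 statements merged into one kernel-verified Lean document; each statement's English description precedes it below -/
import Mathlib

section
/- Let 𝒯 ⊆ A × B × C be a collection of triples containing a subcollection {(x, y, v_1), …, (x, y, v_ρ)} with ρ ≥ k+1 triples that all agree in their first two coordinates. If 𝒯 contains a matching ℳ of size k (k pairwise disjoint triples), then the truncated collection 𝒯' = 𝒯 \ {(x,y,v_i) : i > k} also contains a matching of size k. -/
/-- Safeness of the first reduction rule for the kernelization of
`k`-3-Dimensional Matching: truncating all but `k` triples that agree in their first
two coordinates preserves the existence of a matching of size `k`. -/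
theorem threeDM_truncation_safe {A B C : Type*} [DecidableEq A] [DecidableEq B]
    [DecidableEq C] (T : Finset (A × B × C)) (k ρ : ℕ) (hρ : k + 1 ≤ ρ)
    (x : A) (y : B) (v : Fin ρ → C) (hv : Function.Injective v)
    (hsub : ∀ i, (x, y, v i) ∈ T)
    (M : Finset (A × B × C)) (hMT : M ⊆ T) (hMcard : M.card = k)
    (hM : ∀ t ∈ M, ∀ u ∈ M, t ≠ u → t.1 ≠ u.1 ∧ t.2.1 ≠ u.2.1 ∧ t.2.2 ≠ u.2.2) :
    ∃ M' : Finset (A × B × C),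
      M' ⊆ T.filter (fun t => ∀ i : Fin ρ, k ≤ (i : ℕ) → t ≠ (x, y, v i)) ∧
      M'.card = k ∧
      ∀ t ∈ M', ∀ u ∈ M', t ≠ u → t.1 ≠ u.1 ∧ t.2.1 ≠ u.2.1 ∧ t.2.2 ≠ u.2.2 := by
  by_cases hbad : ∃ t ∈ M, ∃ i : Fin ρ, k ≤ (i : ℕ) ∧ t = (x, y, v i)
  · obtain ⟨t, htM, i, hik, hti⟩ := hbad
    have hk : 0 < k := hMcard ▸ Finset.card_pos.mpr ⟨t, htM⟩
    -- choose j < k with v j not a third coordinate of M.erase t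
    have hcard : ((M.erase t).image (fun u => u.2.2)).card < k := by
      calc ((M.erase t).image (fun u => u.2.2)).card ≤ (M.erase t).card :=
            Finset.card_image_le
        _ = k - 1 := by rw [Finset.card_erase_of_mem htM, hMcard]
        _ < k := by omega
    -- the k values v ⟨0⟩, ..., v ⟨k-1⟩
    have : ∃ j : Fin ρ, (j : ℕ) < k ∧ v j ∉ (M.erase t).image (fun u => u.2.2) := by
      by_contra h
      push_neg at h
      have hsub2 : (Finset.univ.filter (fun j : Fin ρ => (j : ℕ) < k)).image v ⊆
          (M.erase t).image (fun u => u.2.2) := by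
        intro c hc
        simp only [Finset.mem_image, Finset.mem_filter, Finset.mem_univ, true_and] at hc
        obtain ⟨j, hj, rfl⟩ := hc
        exact h j hj
      have hc1 : ((Finset.univ.filter (fun j : Fin ρ => (j : ℕ) < k)).image v).card = k := by
        rw [Finset.card_image_of_injective _ hv]
        have : (Finset.univ.filter (fun j : Fin ρ => (j : ℕ) < k)) =
            (Finset.range k).attachFin (fun m hm => lt_of_lt_of_le (Finset.mem_range.mp hm) (by omega)) := by
          ext j
          simp [Finset.mem_attachFin]
        rw [this, Finset.card_attachFin, Finset.card_range]
      have := Finset.card_le_card hsub2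
      omega
    obtain ⟨j, hjk, hjnot⟩ := this
    have hvij : v i ≠ v j := fun h => by have := hv h; omega
    -- properties of other elements of M
    have hother : ∀ u ∈ M, u ≠ t → u.1 ≠ x ∧ u.2.1 ≠ y := by
      intro u huM hut
      obtain ⟨h1, h2, _⟩ := hM u huM t htM hut
      rw [hti] at h1 h2
      exact ⟨h1, h2⟩
    refine ⟨insert (x, y, v j) (M.erase t), ?_, ?_, ?_⟩
    · intro u hu
      rw [Finset.mem_insert] at hu
      rw [Finset.mem_filter]
      rcases hu with rfl | hu
      · refine ⟨hsub j, ?_⟩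
        intro i' hi' heq
        have : v j = v i' := congrArg (fun p => p.2.2) heq
        have := hv this
        omega
      · have huM := Finset.mem_of_mem_erase hu
        have hut := Finset.ne_of_mem_erase hu
        refine ⟨hMT huM, ?_⟩
        intro i' _ heq
        exact (hother u huM hut).1 (by rw [heq])
    · rw [Finset.card_insert_of_notMem, Finset.card_erase_of_mem htM, hMcard]
      · omega
      · intro hmem
        exact (hother _ (Finset.mem_of_mem_erase hmem) (Finset.ne_of_mem_erase hmem)).1 rfl
    · intro a ha b hb hab
      rw [Finset.mem_insert] at ha hb
      have key : ∀ u ∈ M.erase t, u ≠ (x, y, v j) →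
          (x, y, v j).1 ≠ u.1 ∧ (x, y, v j).2.1 ≠ u.2.1 ∧ (x, y, v j).2.2 ≠ u.2.2 := by
        intro u hu _
        have huM := Finset.mem_of_mem_erase hu
        have hut := Finset.ne_of_mem_erase hu
        obtain ⟨h1, h2⟩ := hother u huM hut
        refine ⟨fun h => h1 h.symm, fun h => h2 h.symm, fun h => hjnot ?_⟩
        exact Finset.mem_image.mpr ⟨u, hu, h.symm⟩
      rcases ha with rfl | ha <;> rcases hb with rfl | hb
      · exact absurd rfl hab
      · exact key b hb (Ne.symm hab)
      · obtain ⟨h1, h2, h3⟩ := key a ha hab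
        exact ⟨h1.symm, h2.symm, h3.symm⟩
      · exact hM a (Finset.mem_of_mem_erase ha) b (Finset.mem_of_mem_erase hb) hab
  · push_neg at hbad
    refine ⟨M, ?_, hMcard, hM⟩
    intro u hu
    rw [Finset.mem_filter]
    exact ⟨hMT hu, fun i hi => hbad u hu i hi⟩
end

section
/- Let G be a graph, χ : V(G) → {1,…,k} a coloring, and s, v vertices. Define 𝒞_s(i, v) as the family of color sets R ⊆ {1,…,k} such that G has a path on i vertices from s to v using pairwise distinct colors with color set exactly R. Then for i ≥ 2: R ∈ 𝒞_s(i, v) if and only if χ(v) ∈ R and there exists a neighbor v' of v with R \ {χ(v)} ∈ 𝒞_s(i−1, v'). -/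
/-- Correctness of the dynamic-programming recurrence in the color-coding algorithm
for `k`-Path: for `i ≥ 2`, a color set `R` is realized by a colorful path on `i`
vertices from `s` to `v` iff `χ v ∈ R` and `R \ {χ v}` is realized by a colorful path
on `i - 1` vertices from `s` to some neighbor `v'` of `v`. -/
theorem colorCoding_recurrence {V : Type*} [DecidableEq V] (G : SimpleGraph V)
    (k : ℕ) (χ : V → Fin k) (s : V) (i : ℕ) (hi : 2 ≤ i) (v : V)
    (R : Finset (Fin k)) :
    (∃ p : G.Walk s v, p.IsPath ∧ p.support.length = i ∧
        (p.support.map χ).Nodup ∧ (p.support.map χ).toFinset = R) ↔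
    (χ v ∈ R ∧ ∃ v', G.Adj v' v ∧ (R \ {χ v}).card = i - 1 ∧
        ∃ p' : G.Walk s v', p'.IsPath ∧ p'.support.length = i - 1 ∧
          (p'.support.map χ).Nodup ∧ (p'.support.map χ).toFinset = R \ {χ v}) := by
  constructor
  · rintro ⟨p, hp, hlen, hnd, hR⟩
    -- decompose p as q.concat h
    have hnn : ¬ p.reverse.Nil := by
      rw [SimpleGraph.Walk.not_nil_iff_lt_length, SimpleGraph.Walk.length_reverse]
      have := p.length_support
      omega
    obtain ⟨u, h, q, hq⟩ := SimpleGraph.Walk.not_nil_iff.mp hnn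
    have hpe : p = q.reverse.concat h.symm := by
      rw [← SimpleGraph.Walk.reverse_reverse p, hq, SimpleGraph.Walk.reverse_cons]
      rfl
    set q' := q.reverse with hq'
    have hsupp : p.support = q'.support ++ [v] := by
      rw [hpe, SimpleGraph.Walk.support_concat]
    rw [hsupp] at hlen hnd hR
    simp only [List.map_append, List.map_cons, List.map_nil] at hnd hR
    rw [List.nodup_append'] at hnd
    obtain ⟨hnd1, -, hdisj⟩ := hnd
    have hχv : χ v ∉ q'.support.map χ := by
      intro hmem
      exact hdisj (a := χ v) hmem (by simp)
    have hRset : R = insert (χ v) (q'.support.map χ).toFinset := by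
      rw [← hR, List.toFinset_append]
      simp [Finset.union_comm]
    have hdiff : (q'.support.map χ).toFinset = R \ {χ v} := by
      rw [hRset]
      symm
      rw [Finset.insert_sdiff_of_mem _ (by simp)]
      rw [Finset.sdiff_singleton_eq_erase, Finset.erase_eq_of_notMem (by
        simpa using hχv)]
    have hlen' : q'.support.length = i - 1 := by
      simp only [List.length_append, List.length_cons, List.length_nil] at hlen
      omega
    refine ⟨by rw [hRset]; simp, u, h.symm, ?_, q', ?_, hlen', hnd1, hdiff⟩
    · rw [← hdiff, List.toFinset_card_of_nodup hnd1, List.length_map, hlen']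
    · rw [SimpleGraph.Walk.isPath_def]
      have := (SimpleGraph.Walk.isPath_def p).mp hp
      rw [hsupp, List.nodup_append'] at this
      exact this.1
  · rintro ⟨hχR, v', hadj, hcard, p', hp', hlen, hnd, hR⟩
    refine ⟨p'.concat hadj, ?_, ?_, ?_, ?_⟩
    · rw [SimpleGraph.Walk.isPath_def, SimpleGraph.Walk.support_concat,
        List.nodup_append']
      refine ⟨(SimpleGraph.Walk.isPath_def p').mp hp', by simp, ?_⟩
      intro a ha hb
      have hav : a = v := by simpa using hb
      rw [hav] at ha
      have : χ v ∈ (p'.support.map χ).toFinset := by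
        simp only [List.mem_toFinset, List.mem_map]
        exact ⟨v, ha, rfl⟩
      rw [hR] at this
      simp at this
    · rw [SimpleGraph.Walk.support_concat, List.length_append, List.length_singleton, hlen]; omega
    · rw [SimpleGraph.Walk.support_concat, List.map_append,
        List.nodup_append']
      refine ⟨hnd, by simp, ?_⟩
      intro a ha hb
      have hav : a = χ v := by simpa using hb
      rw [hav] at ha
      have : χ v ∈ (p'.support.map χ).toFinset := List.mem_toFinset.mpr ha
      rw [hR] at this
      simp at this
    · rw [SimpleGraph.Walk.support_concat, List.map_append,
        List.toFinset_append, hR]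
      simp only [List.map_cons, List.map_nil, List.toFinset_cons, List.toFinset_nil,
        LawfulSingleton.insert_empty_eq]
      exact Finset.sdiff_union_of_subset (Finset.singleton_subset_iff.mpr hχR)
end

section
/- Let ℱ be a family of functions from {1,…,n} to {1,…,k} that is k-perfect, i.e., for every S ⊆ {1,…,n} with |S| = k there is χ ∈ ℱ injective on S. Then a graph G on vertex set {1,…,n} contains a path on k vertices if and only if there exists χ ∈ ℱ such that G contains a path on k vertices whose χ-colors are pairwise distinct. -/
namespace SimpleGraph.Walk

variable {V α : Type*} [DecidableEq V] {G : SimpleGraph V} {u v : V} {p : G.Walk u v}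

lemma IsPath.card_toFinset_support (hp : p.IsPath) :
    p.support.toFinset.card = p.support.length :=
  List.toFinset_card_of_nodup hp.support_nodup

lemma IsPath.nodup_map_support {f : V → α} (hp : p.IsPath)
    (hf : Set.InjOn f p.support.toFinset) : (p.support.map f).Nodup :=
  hp.support_nodup.map_on fun _ hx _ hy => hf (by simpa using hx) (by simpa using hy)

end SimpleGraph.Walk

/-- Reduction from `k`-Path to `k`-Colorful Path via a `k`-perfect family of hash
functions: `G` contains a path on `k` vertices iff for some `χ` in the family, `G`
contains a path on `k` vertices whose colors under `χ` are pairwise distinct. -/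
theorem kPath_iff_colorful_kPath (n k : ℕ) (F : Finset (Fin n → Fin k))
    (hperfect : ∀ S : Finset (Fin n), S.card = k →
      ∃ χ ∈ F, Set.InjOn χ (S : Set (Fin n)))
    (G : SimpleGraph (Fin n)) :
    (∃ (u v : Fin n) (p : G.Walk u v), p.IsPath ∧ p.support.length = k) ↔
    (∃ χ ∈ F, ∃ (u v : Fin n) (p : G.Walk u v), p.IsPath ∧ p.support.length = k ∧
      (p.support.map χ).Nodup) := by
  constructor
  · rintro ⟨u, v, p, hp, hlen⟩
    obtain ⟨χ, hχF, hinj⟩ := hperfect _ (hp.card_toFinset_support.trans hlen)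
    exact ⟨χ, hχF, u, v, p, hp, hlen, hp.nodup_map_support hinj⟩
  · rintro ⟨-, -, u, v, p, hp, hlen, -⟩
    exact ⟨u, v, p, hp, hlen⟩
end

section
/- Let G be a graph and let (V_0, V_{1/2}, V_1) be a partition of V(G) such that no edge has both endpoints in V_0, no edge joins V_0 to V_{1/2}, and every minimum vertex cover S of G satisfies V_1 ⊆ S ⊆ V_1 ∪ V_{1/2}. Then the minimum vertex cover size of G equals the minimum vertex cover size of the induced subgraph G[V_{1/2}] plus |V_1|. -/
/-- `IsVC G W S` : `S` is a vertex cover of the subgraph of `G` induced by `W`. -/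
def IsVC {V : Type*} (G : SimpleGraph V) (W S : Finset V) : Prop :=
  S ⊆ W ∧ ∀ u v, G.Adj u v → u ∈ W → v ∈ W → u ∈ S ∨ v ∈ S

/-- Minimum size of a vertex cover of the subgraph of `G` induced by `W`. -/
noncomputable def vcNumOn {V : Type*} (G : SimpleGraph V) (W : Finset V) : ℕ :=
  sInf {n | ∃ S : Finset V, S.card = n ∧ IsVC G W S}

/-- The Nemhauser–Trotter identity: given the half-integral LP partition
`(V₀, V½, V₁)` (no edges inside `V₀` or between `V₀` and `V½`, and every minimum
vertex cover `S` satisfies `V₁ ⊆ S ⊆ V₁ ∪ V½`), the minimum vertex cover size of `G`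
equals that of `G[V½]` plus `|V₁|`. -/
theorem nemhauser_trotter_identity {V : Type*} [Fintype V] [DecidableEq V]
    (G : SimpleGraph V) (V0 V12 V1 : Finset V)
    (hpart : ∀ v : V, v ∈ V0 ∨ v ∈ V12 ∨ v ∈ V1)
    (hd01 : Disjoint V0 V12) (hd02 : Disjoint V0 V1) (hd12 : Disjoint V12 V1)
    (h00 : ∀ u v, G.Adj u v → ¬(u ∈ V0 ∧ v ∈ V0))
    (h0half : ∀ u v, G.Adj u v → ¬(u ∈ V0 ∧ v ∈ V12))
    (hopt : ∀ S : Finset V, IsVC G Finset.univ S → S.card = vcNumOn G Finset.univ →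
      V1 ⊆ S ∧ S ⊆ V1 ∪ V12) :
    vcNumOn G Finset.univ = vcNumOn G V12 + V1.card := by
  have hne : ∀ W : Finset V, {n | ∃ S : Finset V, S.card = n ∧ IsVC G W S}.Nonempty := by
    intro W
    exact ⟨W.card, W, rfl, Finset.Subset.refl W, fun u v _ hu _ => Or.inl hu⟩
  -- minimum cover of G
  obtain ⟨S, hScard, hSvc⟩ := Nat.sInf_mem (hne Finset.univ)
  obtain ⟨h1S, hS1⟩ := hopt S hSvc hScard
  -- minimum cover of G[V12]
  obtain ⟨T, hTcard, hTsub, hTcov⟩ := Nat.sInf_mem (hne V12)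
  apply le_antisymm
  · -- T ∪ V1 covers G
    have hcov : IsVC G Finset.univ (T ∪ V1) := by
      refine ⟨Finset.subset_univ _, fun u v huv _ _ => ?_⟩
      rcases hpart u with hu | hu | hu
      · rcases hpart v with hv | hv | hv
        · exact absurd ⟨hu, hv⟩ (h00 u v huv)
        · exact absurd ⟨hu, hv⟩ (h0half u v huv)
        · exact Or.inr (Finset.mem_union_right _ hv)
      · rcases hpart v with hv | hv | hv
        · exact absurd ⟨hv, hu⟩ (h0half v u huv.symm)
        · rcases hTcov u v huv hu hv with h | h
          · exact Or.inl (Finset.mem_union_left _ h)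
          · exact Or.inr (Finset.mem_union_left _ h)
        · exact Or.inr (Finset.mem_union_right _ hv)
      · exact Or.inl (Finset.mem_union_right _ hu)
    have hdisj : Disjoint T V1 := Finset.disjoint_of_subset_left hTsub hd12
    have : vcNumOn G Finset.univ ≤ (T ∪ V1).card :=
      Nat.sInf_le ⟨T ∪ V1, rfl, hcov⟩
    rwa [Finset.card_union_of_disjoint hdisj, hTcard] at this
  · -- S \ V1 covers G[V12]
    have hsub : S \ V1 ⊆ V12 := by
      intro x hx
      rw [Finset.mem_sdiff] at hx
      rcases Finset.mem_union.1 (hS1 hx.1) with h | h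
      · exact absurd h hx.2
      · exact h
    have hcov : IsVC G V12 (S \ V1) := by
      refine ⟨hsub, fun u v huv hu hv => ?_⟩
      rcases hSvc.2 u v huv (Finset.mem_univ u) (Finset.mem_univ v) with h | h
      · exact Or.inl (Finset.mem_sdiff.2 ⟨h, fun h1 => (Finset.disjoint_left.1 hd12) hu h1⟩)
      · exact Or.inr (Finset.mem_sdiff.2 ⟨h, fun h1 => (Finset.disjoint_left.1 hd12) hv h1⟩)
    have h1 : vcNumOn G V12 ≤ (S \ V1).card := Nat.sInf_le ⟨S \ V1, rfl, hcov⟩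
    have h2 : (S \ V1).card = S.card - V1.card := Finset.card_sdiff_of_subset h1S
    have h3 : V1.card ≤ S.card := Finset.card_le_card h1S
    have hS' : S.card = vcNumOn G Finset.univ := hScard
    have hT' : T.card = vcNumOn G V12 := hTcard
    omega
end
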